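/- arXiv:2406.11058 — 3 statements merged into one kernel-verified Lean document; each statement's English description precedes it below -/
import Mathlib

section
/- Let H be a bialgebra over a field k and σ : H ⊗ H → k a normalized convolution-invertible 2-cocycle with convolution inverse σ⁻¹. Then for all x, y, z ∈ H: σ(x₍₁₎, y₍₁₎z₍₁₎) σ⁻¹(x₍₂₎y₍₂₎, z₍₂₎) = σ⁻¹(y₍₁₎, z) σ(x, y₍₂₎), and dually σ(x₍₁₎y₍₁₎, z₍₁₎) σ⁻¹(x₍₂₎, y₍₂₎z₍₂₎) = σ(y₍₂₎, z) σ⁻¹(x, y₍₁₎). -/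
/-!
In the convolution algebra of functionals on `H ⊗ H ⊗ H`, the four functionals
`u = σ(x, yz)`, `v = σ(xy, z)`, `s = ε(x) σ(y, z)` and `t = σ(x, y) ε(z)` are pullbacks of `σ`
along coalgebra maps `H ⊗ H ⊗ H → H ⊗ H`; pulling back is multiplicative, so each is invertible
with inverse the pullback of `σ⁻¹`. The cocycle condition reads `s * u = t * v`, whence
`u * v⁻¹ = s⁻¹ * t` and `v * u⁻¹ = t⁻¹ * s`, which are the two identities.
-/

open TensorProduct

noncomputable section

variable (k : Type*) [Field k] (H : Type*) [Ring H] [Bialgebra k H]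

/-- The comultiplication of `H ⊗ H`: `x ⊗ y ↦ (x₍₁₎ ⊗ y₍₁₎) ⊗ (x₍₂₎ ⊗ y₍₂₎)`. -/
def comul2 : H ⊗[k] H →ₗ[k] (H ⊗[k] H) ⊗[k] (H ⊗[k] H) :=
  (TensorProduct.tensorTensorTensorComm k H H H H).toLinearMap
    ∘ₗ TensorProduct.map (Coalgebra.comul (R := k) (A := H)) (Coalgebra.comul (R := k) (A := H))

/-- Convolution product of two linear functionals on `H ⊗ H`. -/
def conv2 (σ σ' : H ⊗[k] H →ₗ[k] k) : H ⊗[k] H →ₗ[k] k :=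
  (LinearMap.mul' k k) ∘ₗ TensorProduct.map σ σ' ∘ₗ comul2 k H

/-- The counit of `H ⊗ H`. -/
def epsilon2 : H ⊗[k] H →ₗ[k] k :=
  (LinearMap.mul' k k) ∘ₗ
    TensorProduct.map (Coalgebra.counit (R := k) (A := H)) (Coalgebra.counit (R := k) (A := H))

/-- Normalization of a 2-cochain: `σ(1, x) = ε(x) = σ(x, 1)`. -/
def IsNormalized (σ : H ⊗[k] H →ₗ[k] k) : Prop :=
  ∀ x : H, σ ((1 : H) ⊗ₜ[k] x) = Coalgebra.counit (R := k) (A := H) x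
    ∧ σ (x ⊗ₜ[k] (1 : H)) = Coalgebra.counit (R := k) (A := H) x

/-- `x ⊗ (y ⊗ z) ↦ σ(y₍₁₎, z₍₁₎) σ(x, y₍₂₎z₍₂₎)`. -/
def cocLHS (σ : H ⊗[k] H →ₗ[k] k) : H ⊗[k] (H ⊗[k] H) →ₗ[k] k :=
  (LinearMap.mul' k k)
    ∘ₗ TensorProduct.map σ (σ ∘ₗ TensorProduct.map LinearMap.id (LinearMap.mul' k H))
    ∘ₗ (TensorProduct.leftComm k H (H ⊗[k] H) (H ⊗[k] H)).toLinearMap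
    ∘ₗ TensorProduct.map LinearMap.id (comul2 k H)

/-- `x ⊗ (y ⊗ z) ↦ σ(x₍₁₎, y₍₁₎) σ(x₍₂₎y₍₂₎, z)`. -/
def cocRHS (σ : H ⊗[k] H →ₗ[k] k) : H ⊗[k] (H ⊗[k] H) →ₗ[k] k :=
  (LinearMap.mul' k k)
    ∘ₗ TensorProduct.map σ (σ ∘ₗ TensorProduct.map (LinearMap.mul' k H) LinearMap.id)
    ∘ₗ (TensorProduct.assoc k (H ⊗[k] H) (H ⊗[k] H) H).toLinearMap
    ∘ₗ TensorProduct.map (comul2 k H) LinearMap.id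
    ∘ₗ (TensorProduct.assoc k H H H).symm.toLinearMap

/-- `σ` is a normalized 2-cocycle: `σ(x, σ(y₁,z₁)y₂z₂) = σ(σ(x₁,y₁)x₂y₂, z)`. -/
def IsCocycle (σ : H ⊗[k] H →ₗ[k] k) : Prop :=
  IsNormalized k H σ ∧ cocLHS k H σ = cocRHS k H σ

/-- The comultiplication of `H ⊗ (H ⊗ H)` (diagonal on all three factors). -/
def comul3 : H ⊗[k] (H ⊗[k] H) →ₗ[k]
    (H ⊗[k] (H ⊗[k] H)) ⊗[k] (H ⊗[k] (H ⊗[k] H)) :=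
  (TensorProduct.tensorTensorTensorComm k H H (H ⊗[k] H) (H ⊗[k] H)).toLinearMap
    ∘ₗ TensorProduct.map (Coalgebra.comul (R := k) (A := H)) (comul2 k H)

/-- Convolution product of two linear functionals on `H ⊗ (H ⊗ H)`. -/
def conv3 (f g : H ⊗[k] (H ⊗[k] H) →ₗ[k] k) : H ⊗[k] (H ⊗[k] H) →ₗ[k] k :=
  (LinearMap.mul' k k) ∘ₗ TensorProduct.map f g ∘ₗ comul3 k H


section

open WithConv

variable {R C D ι : Type*} [CommSemiring R] [AddCommMonoid C] [Module R C] [Coalgebra R C]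
  [AddCommMonoid D] [Module R D] [Coalgebra R D]

theorem Coalgebra.sum_smul_counit {c : C} (𝓡 : Coalgebra.Repr R c ι) :
    ∑ i ∈ 𝓡.index, Coalgebra.counit (R := R) (𝓡.right i) • 𝓡.left i = c := by
  simpa only [map_sum, _root_.TensorProduct.rid_tmul, one_smul] using
    congr(_root_.TensorProduct.rid R C $(Coalgebra.sum_tmul_counit_eq 𝓡))

variable (R C D) in
def Coalgebra.TensorProduct.projRight : C ⊗[R] D →ₗc[R] D :=
  (Coalgebra.TensorProduct.lid R D).toCoalgHom.comp
    (Coalgebra.TensorProduct.map (Coalgebra.counitCoalgHom R C) (CoalgHom.id R D))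

variable (R C D) in
def Coalgebra.TensorProduct.projLeft : C ⊗[R] D →ₗc[R] C :=
  (Coalgebra.TensorProduct.rid R R C).toCoalgHom.comp
    (Coalgebra.TensorProduct.map (CoalgHom.id R C) (Coalgebra.counitCoalgHom R D))

@[simp] theorem Coalgebra.TensorProduct.projRight_tmul (c : C) (d : D) :
    projRight R C D (c ⊗ₜ d) = Coalgebra.counit (R := R) c • d := rfl

@[simp] theorem Coalgebra.TensorProduct.projLeft_tmul (c : C) (d : D) :
    projLeft R C D (c ⊗ₜ d) = Coalgebra.counit (R := R) d • c := rfl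

theorem LinearMap.convMul_comp_coalgHom_eq_one {A B : Type*} [Semiring A] [Algebra R A]
    [AddCommMonoid B] [Module R B] [Coalgebra R B] {f g : C →ₗ[R] A}
    (hfg : toConv f * toConv g = 1) (p : B →ₗc[R] C) :
    toConv (f ∘ₗ p.toLinearMap) * toConv (g ∘ₗ p.toLinearMap) = 1 := by
  apply ofConv_injective
  rw [← convMul_comp_coalgHom_distrib (toConv f) (toConv g) p, hfg]
  ext
  simp

end

theorem mul_eq_mul_of_mul_eq_mul {M : Type*} [Monoid M] {s t u v s' v' : M}
    (h : s * u = t * v) (hs : s' * s = 1) (hv : v * v' = 1) : u * v' = s' * t :=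
  calc u * v' = s' * (s * u) * v' := by rw [← mul_assoc, hs, one_mul]
    _ = s' * t := by rw [h, mul_assoc, mul_assoc, hv, mul_one]

namespace TwoCocycle

open LinearMap WithConv Coalgebra.TensorProduct
open scoped Coalgebra

def mul₂₃ : H ⊗[k] (H ⊗[k] H) →ₗc[k] H ⊗[k] H :=
  Coalgebra.TensorProduct.map (CoalgHom.id k H) (Bialgebra.mulCoalgHom k H)

def mul₁₂ : H ⊗[k] (H ⊗[k] H) →ₗc[k] H ⊗[k] H :=
  (Coalgebra.TensorProduct.map (Bialgebra.mulCoalgHom k H) (CoalgHom.id k H)).comp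
    (Coalgebra.TensorProduct.assoc k k H H H).symm.toCoalgHom

def counit₃ : H ⊗[k] (H ⊗[k] H) →ₗc[k] H ⊗[k] H :=
  (projLeft k (H ⊗[k] H) H).comp (Coalgebra.TensorProduct.assoc k k H H H).symm.toCoalgHom

variable {k H}

theorem toConv_mul_toConv_eq_one_iff (σ τ : H ⊗[k] H →ₗ[k] k) :
    toConv σ * toConv τ = 1 ↔ conv2 k H σ τ = epsilon2 k H := by
  have hε : epsilon2 k H = (1 : WithConv (H ⊗[k] H →ₗ[k] k)).ofConv := by
    ext x y
    simp [epsilon2, mul_comm]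
  rw [hε, ← ofConv_injective.eq_iff]
  rfl

/- In the four identifications below, both sides are expanded over Sweedler representations of
`x`, `y`, `z`; on the side where a counit has already been contracted, it is first reinserted
through `x = ∑ ε(x₁) x₂` (or `x = ∑ ε(x₂) x₁`), so that both become the same triple sum. -/
theorem cocLHS_eq (σ : H ⊗[k] H →ₗ[k] k) :
    cocLHS k H σ = (toConv (σ ∘ₗ (projRight k H (H ⊗[k] H)).toLinearMap)
      * toConv (σ ∘ₗ (mul₂₃ k H).toLinearMap)).ofConv := by
  ext x y z
  simp only [AlgebraTensorModule.curry_apply, curry_apply, coe_restrictScalars]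
  rw [((ℛ k x).tmul ((ℛ k y).tmul (ℛ k z))).convMul_apply]
  conv_lhs => rw [← Coalgebra.sum_counit_smul (ℛ k x)]
  simp [cocLHS, comul2, mul₂₃, Finset.sum_product, ← (ℛ k y).eq, ← (ℛ k z).eq, sum_tmul,
    tmul_sum, ← smul_tmul', map_sum, Finset.mul_sum, mul_assoc,
    Finset.sum_comm (s := (ℛ k z).index) (t := (ℛ k y).index)]

theorem cocRHS_eq (σ : H ⊗[k] H →ₗ[k] k) :
    cocRHS k H σ = (toConv (σ ∘ₗ (counit₃ k H).toLinearMap)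
      * toConv (σ ∘ₗ (mul₁₂ k H).toLinearMap)).ofConv := by
  ext x y z
  simp only [AlgebraTensorModule.curry_apply, curry_apply, coe_restrictScalars]
  rw [((ℛ k x).tmul ((ℛ k y).tmul (ℛ k z))).convMul_apply]
  conv_lhs => rw [← Coalgebra.sum_counit_smul (ℛ k z)]
  simp [cocRHS, comul2, mul₁₂, counit₃, Finset.sum_product, ← (ℛ k y).eq, ← (ℛ k x).eq,
    sum_tmul, tmul_sum, map_sum, Finset.mul_sum, mul_assoc,
    Finset.sum_comm (s := (ℛ k z).index) (t := (ℛ k y).index),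
    Finset.sum_comm (s := (ℛ k z).index) (t := (ℛ k x).index),
    Finset.sum_comm (s := (ℛ k y).index) (t := (ℛ k x).index)]

theorem _root_.IsCocycle.toConv_mul_eq {σ : H ⊗[k] H →ₗ[k] k} (hσ : IsCocycle k H σ) :
    toConv (σ ∘ₗ (projRight k H (H ⊗[k] H)).toLinearMap) * toConv (σ ∘ₗ (mul₂₃ k H).toLinearMap)
      = toConv (σ ∘ₗ (counit₃ k H).toLinearMap) * toConv (σ ∘ₗ (mul₁₂ k H).toLinearMap) :=
  ofConv_injective ((cocLHS_eq σ).symm.trans (hσ.2.trans (cocRHS_eq σ)))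

theorem convMul_projRight_counit₃ (σ σ' : H ⊗[k] H →ₗ[k] k) :
    (toConv (σ' ∘ₗ (projRight k H (H ⊗[k] H)).toLinearMap)
      * toConv (σ ∘ₗ (counit₃ k H).toLinearMap)).ofConv
      = (LinearMap.mul' k k) ∘ₗ TensorProduct.map σ' σ
          ∘ₗ (TensorProduct.assoc k H H (H ⊗[k] H)).symm.toLinearMap
          ∘ₗ TensorProduct.map LinearMap.id (TensorProduct.leftComm k H H H).toLinearMap
          ∘ₗ TensorProduct.map LinearMap.id
              (TensorProduct.map LinearMap.id (TensorProduct.comm k H H).toLinearMap)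
          ∘ₗ (TensorProduct.leftComm k H H (H ⊗[k] H)).toLinearMap
          ∘ₗ TensorProduct.map LinearMap.id (TensorProduct.assoc k H H H).toLinearMap
          ∘ₗ TensorProduct.map LinearMap.id
              (TensorProduct.map (Coalgebra.comul (R := k) (A := H)) LinearMap.id) := by
  ext x y z
  simp only [AlgebraTensorModule.curry_apply, curry_apply, coe_restrictScalars]
  rw [((ℛ k x).tmul ((ℛ k y).tmul (ℛ k z))).convMul_apply]
  conv_rhs => rw [← Coalgebra.sum_counit_smul (ℛ k x), ← Coalgebra.sum_smul_counit (ℛ k z)]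
  simp [counit₃, Finset.sum_product, ← (ℛ k y).eq, sum_tmul, tmul_sum, ← smul_tmul', map_sum,
    Finset.mul_sum, mul_comm, mul_left_comm,
    Finset.sum_comm (s := (ℛ k z).index) (t := (ℛ k y).index),
    Finset.sum_comm (s := (ℛ k z).index) (t := (ℛ k x).index)]

theorem convMul_counit₃_projRight (σ σ' : H ⊗[k] H →ₗ[k] k) :
    (toConv (σ' ∘ₗ (counit₃ k H).toLinearMap)
      * toConv (σ ∘ₗ (projRight k H (H ⊗[k] H)).toLinearMap)).ofConv
      = (LinearMap.mul' k k) ∘ₗ TensorProduct.map σ (σ' ∘ₗ (TensorProduct.comm k H H).toLinearMap)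
          ∘ₗ (TensorProduct.leftComm k H (H ⊗[k] H) H).toLinearMap
          ∘ₗ TensorProduct.map LinearMap.id (TensorProduct.comm k H (H ⊗[k] H)).toLinearMap
          ∘ₗ (TensorProduct.leftComm k H H (H ⊗[k] H)).toLinearMap
          ∘ₗ TensorProduct.map LinearMap.id (TensorProduct.assoc k H H H).toLinearMap
          ∘ₗ TensorProduct.map LinearMap.id
              (TensorProduct.map (Coalgebra.comul (R := k) (A := H)) LinearMap.id) := by
  ext x y z
  simp only [AlgebraTensorModule.curry_apply, curry_apply, coe_restrictScalars]
  rw [((ℛ k x).tmul ((ℛ k y).tmul (ℛ k z))).convMul_apply]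
  conv_rhs => rw [← Coalgebra.sum_smul_counit (ℛ k x), ← Coalgebra.sum_counit_smul (ℛ k z)]
  simp [counit₃, Finset.sum_product, ← (ℛ k y).eq, sum_tmul, tmul_sum, ← smul_tmul', map_sum,
    Finset.mul_sum, mul_comm, mul_left_comm,
    Finset.sum_comm (s := (ℛ k z).index) (t := (ℛ k y).index),
    Finset.sum_comm (s := (ℛ k z).index) (t := (ℛ k x).index)]

end TwoCocycle

/-- For a normalized convolution-invertible 2-cocycle `σ` with inverse `σ'`:
`σ(x₁, y₁z₁) σ'(x₂y₂, z₂) = σ'(y₁, z) σ(x, y₂)` and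
`σ(x₁y₁, z₁) σ'(x₂, y₂z₂) = σ(y₂, z) σ'(x, y₁)`. -/
theorem stmt6 (k : Type*) [Field k] (H : Type*) [Ring H] [Bialgebra k H]
    (σ σ' : H ⊗[k] H →ₗ[k] k)
    (hcoc : IsCocycle k H σ)
    (hinv₁ : conv2 k H σ σ' = epsilon2 k H)
    (hinv₂ : conv2 k H σ' σ = epsilon2 k H) :
    -- first identity
    conv3 k H (σ ∘ₗ TensorProduct.map LinearMap.id (LinearMap.mul' k H))
        (σ' ∘ₗ TensorProduct.map (LinearMap.mul' k H) LinearMap.id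
          ∘ₗ (TensorProduct.assoc k H H H).symm.toLinearMap)
      = (LinearMap.mul' k k) ∘ₗ TensorProduct.map σ' σ
          ∘ₗ (TensorProduct.assoc k H H (H ⊗[k] H)).symm.toLinearMap
          ∘ₗ TensorProduct.map LinearMap.id (TensorProduct.leftComm k H H H).toLinearMap
          ∘ₗ TensorProduct.map LinearMap.id
              (TensorProduct.map LinearMap.id (TensorProduct.comm k H H).toLinearMap)
          ∘ₗ (TensorProduct.leftComm k H H (H ⊗[k] H)).toLinearMap
          ∘ₗ TensorProduct.map LinearMap.id (TensorProduct.assoc k H H H).toLinearMap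
          ∘ₗ TensorProduct.map LinearMap.id
              (TensorProduct.map (Coalgebra.comul (R := k) (A := H)) LinearMap.id)
    -- second (dual) identity
    ∧ conv3 k H (σ ∘ₗ TensorProduct.map (LinearMap.mul' k H) LinearMap.id
          ∘ₗ (TensorProduct.assoc k H H H).symm.toLinearMap)
        (σ' ∘ₗ TensorProduct.map LinearMap.id (LinearMap.mul' k H))
      = (LinearMap.mul' k k) ∘ₗ TensorProduct.map σ (σ' ∘ₗ (TensorProduct.comm k H H).toLinearMap)
          ∘ₗ (TensorProduct.leftComm k H (H ⊗[k] H) H).toLinearMap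
          ∘ₗ TensorProduct.map LinearMap.id (TensorProduct.comm k H (H ⊗[k] H)).toLinearMap
          ∘ₗ (TensorProduct.leftComm k H H (H ⊗[k] H)).toLinearMap
          ∘ₗ TensorProduct.map LinearMap.id (TensorProduct.assoc k H H H).toLinearMap
          ∘ₗ TensorProduct.map LinearMap.id
              (TensorProduct.map (Coalgebra.comul (R := k) (A := H)) LinearMap.id) := by
  open TwoCocycle WithConv in
  have hσσ' := (toConv_mul_toConv_eq_one_iff σ σ').mpr hinv₁
  have hσ'σ := (toConv_mul_toConv_eq_one_iff σ' σ).mpr hinv₂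
  have hcocycle := hcoc.toConv_mul_eq
  refine ⟨?_, ?_⟩
  · rw [← convMul_projRight_counit₃]
    exact congrArg ofConv <| mul_eq_mul_of_mul_eq_mul hcocycle
      (LinearMap.convMul_comp_coalgHom_eq_one hσ'σ _)
      (LinearMap.convMul_comp_coalgHom_eq_one hσσ' _)
  · rw [← convMul_counit₃_projRight]
    exact congrArg ofConv <| mul_eq_mul_of_mul_eq_mul hcocycle.symm
      (LinearMap.convMul_comp_coalgHom_eq_one hσ'σ _)
      (LinearMap.convMul_comp_coalgHom_eq_one hσσ' _)
end
end

section
/- Let H be a bialgebra over a field k and σ : H ⊗ H → k a normalized convolution-invertible 2-cocycle. Then the twisted product x ·_σ y := σ(x₍₁₎, y₍₁₎) x₍₂₎y₍₂₎ σ⁻¹(x₍₃₎, y₍₃₎) is associative with unit 1, and the original coproduct Δ and counit ε are algebra maps for this new product, so that H^σ := (H, ·_σ, 1, Δ, ε) is again a bialgebra. -/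
open TensorProduct

noncomputable section

variable (k : Type*) [Field k] (H : Type*) [Ring H] [Bialgebra k H]

/-- The cocycle-twisted multiplication `x ·_σ y = σ(x₁, y₁) x₂y₂ σ'(x₃, y₃)`. -/
def twmul (σ σ' : H ⊗[k] H →ₗ[k] k) : H ⊗[k] H →ₗ[k] H :=
  (TensorProduct.rid k H).toLinearMap
    ∘ₗ TensorProduct.map
        ((TensorProduct.lid k H).toLinearMap ∘ₗ TensorProduct.map σ (LinearMap.mul' k H)) σ'
    ∘ₗ TensorProduct.map (comul2 k H) LinearMap.id
    ∘ₗ comul2 k H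

/-!
The twisted product is the conjugate `σ * m * σ⁻¹` of the multiplication `m` in the convolution
ring of linear maps `H ⊗ H → H`, with `σ` acting through `k → H`. Conjugation by a scalar-valued
unit commutes with postcomposition by any linear map, and precomposition by a coalgebra map `γ`
turns it into conjugation by `σ ∘ γ`. Hence `Δ` and `ε` stay multiplicative, and since
normalisation makes `σ` trivial along `x ↦ 1 ⊗ x` and `x ↦ x ⊗ 1`, `1` stays a unit. As `·_σ` is
then a coalgebra map, `(x ·_σ y) ·_σ z` and `x ·_σ (y ·_σ z)` are the conjugates of `xyz` by the
units `σ(x₁, y₁) σ(x₂y₂, z)` and `σ(y₁, z₁) σ(x, y₂z₂)`, which the cocycle identity equates.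
-/

open Coalgebra WithConv LinearMap

namespace Coalgebra.TensorProduct

variable {R C D : Type*} [CommSemiring R]
  [AddCommMonoid C] [Module R C] [Coalgebra R C]
  [AddCommMonoid D] [Module R D] [Coalgebra R D]

variable (R C D) in
def fstCoalgHom : C ⊗[R] D →ₗc[R] C :=
  (Coalgebra.TensorProduct.rid R R C).toCoalgHom.comp
    (Coalgebra.TensorProduct.map (CoalgHom.id R C) (counitCoalgHom R D))

variable (R C D) in
def sndCoalgHom : C ⊗[R] D →ₗc[R] D :=
  (Coalgebra.TensorProduct.lid R D).toCoalgHom.comp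
    (Coalgebra.TensorProduct.map (counitCoalgHom R C) (CoalgHom.id R D))

@[simp] lemma fstCoalgHom_tmul (c : C) (d : D) :
    fstCoalgHom R C D (c ⊗ₜ d) = counit (R := R) d • c := rfl

@[simp] lemma sndCoalgHom_tmul (c : C) (d : D) :
    sndCoalgHom R C D (c ⊗ₜ d) = counit (R := R) c • d := rfl

end Coalgebra.TensorProduct

namespace LinearMap

variable {R C C' D A B : Type*} [CommSemiring R]
  [AddCommMonoid C] [Module R C] [Coalgebra R C]
  [AddCommMonoid C'] [Module R C'] [Coalgebra R C']
  [AddCommMonoid D] [Module R D] [Coalgebra R D]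
  [Semiring A] [Algebra R A] [Semiring B] [Algebra R B]

def convScalarHom : WithConv (C →ₗ[R] R) →+* WithConv (C →ₗ[R] A) where
  toFun f := toConv (Algebra.linearMap R A ∘ₗ f.ofConv)
  map_one' := by ext; simp
  map_mul' f g := congrArg toConv (algHom_comp_convMul_distrib (Algebra.ofId R A) f g)
  map_zero' := by ext; simp
  map_add' f g := by ext; simp

@[simp] lemma convScalarHom_apply (f : WithConv (C →ₗ[R] R)) (c : C) :
    convScalarHom (A := A) f c = algebraMap R A (f c) := rfl

lemma toConv_counit : toConv (counit : C →ₗ[R] R) = 1 := by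
  ext; simp

lemma convScalarHom_self (f : WithConv (C →ₗ[R] R)) : convScalarHom (A := R) f = f := by
  ext; simp

def convPrecomp (γ : C' →ₗc[R] C) :
    WithConv (C →ₗ[R] A) →+* WithConv (C' →ₗ[R] A) where
  toFun f := toConv (f.ofConv ∘ₗ γ.toLinearMap)
  map_one' := by ext; simp
  map_mul' f g := congrArg toConv (convMul_comp_coalgHom_distrib f g γ)
  map_zero' := by ext; simp
  map_add' f g := by ext; simp

@[simp] lemma convPrecomp_apply (γ : C' →ₗc[R] C) (f : WithConv (C →ₗ[R] A)) (c : C') :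
    convPrecomp γ f c = f (γ c) := rfl

def convPrecompUnits (γ : C' →ₗc[R] C) :
    (WithConv (C →ₗ[R] R))ˣ →* (WithConv (C' →ₗ[R] R))ˣ :=
  Units.map (convPrecomp γ).toMonoidHom

lemma convPrecomp_convScalarHom (γ : C' →ₗc[R] C) (f : WithConv (C →ₗ[R] R)) :
    convPrecomp γ (convScalarHom (A := A) f) = convScalarHom (convPrecomp γ f) := rfl

lemma comp_convScalarHom_mul (φ : A →ₗ[R] B) (f : WithConv (C →ₗ[R] R))
    (F : WithConv (C →ₗ[R] A)) :
    toConv (φ ∘ₗ (convScalarHom f * F).ofConv) =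
      convScalarHom f * toConv (φ ∘ₗ F.ofConv) := by
  have h : φ ∘ₗ mul' R A ∘ₗ map (convScalarHom f).ofConv F.ofConv =
      mul' R B ∘ₗ map (convScalarHom f).ofConv (φ ∘ₗ F.ofConv) := by
    ext; simp [← Algebra.smul_def]
  ext c
  exact DFunLike.congr_fun h (comul c)

lemma comp_mul_convScalarHom (φ : A →ₗ[R] B) (f : WithConv (C →ₗ[R] R))
    (F : WithConv (C →ₗ[R] A)) :
    toConv (φ ∘ₗ (F * convScalarHom f).ofConv) =
      toConv (φ ∘ₗ F.ofConv) * convScalarHom f := by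
  have h : φ ∘ₗ mul' R A ∘ₗ map F.ofConv (convScalarHom f).ofConv =
      mul' R B ∘ₗ map (φ ∘ₗ F.ofConv) (convScalarHom f).ofConv := by
    ext; simp [← Algebra.commutes, ← Algebra.smul_def]
  ext c
  exact DFunLike.congr_fun h (comul c)

def twist (w : (WithConv (C →ₗ[R] R))ˣ) (F : WithConv (C →ₗ[R] A)) :
    WithConv (C →ₗ[R] A) :=
  convScalarHom (w : WithConv (C →ₗ[R] R)) * F * convScalarHom ↑w⁻¹

lemma twist_mul (w : (WithConv (C →ₗ[R] R))ˣ) (F G : WithConv (C →ₗ[R] A)) :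
    twist w (F * G) = twist w F * twist w G := by
  have h : ∀ X, convScalarHom (A := A) (↑w⁻¹ : WithConv (C →ₗ[R] R)) *
      (convScalarHom (w : WithConv (C →ₗ[R] R)) * X) = X := by
    intro X
    rw [← mul_assoc, ← map_mul, Units.inv_mul, map_one, one_mul]
  simp only [twist, mul_assoc, h]

lemma twist_one (w : (WithConv (C →ₗ[R] R))ˣ) :
    twist w (1 : WithConv (C →ₗ[R] A)) = 1 := by
  rw [twist, mul_one, ← map_mul, Units.mul_inv, map_one]

lemma one_twist (F : WithConv (C →ₗ[R] A)) : twist 1 F = F := by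
  simp [twist]

lemma twist_twist (w v : (WithConv (C →ₗ[R] R))ˣ) (F : WithConv (C →ₗ[R] A)) :
    twist w (twist v F) = twist (w * v) F := by
  simp only [twist, Units.val_mul, mul_inv_rev, map_mul, mul_assoc]

lemma twist_eq_conj (w : (WithConv (C →ₗ[R] R))ˣ) (f : WithConv (C →ₗ[R] R)) :
    twist w f = w * f * ↑w⁻¹ := by
  simp only [twist, convScalarHom_self]

lemma comp_twist (φ : A →ₗ[R] B) (w : (WithConv (C →ₗ[R] R))ˣ)
    (F : WithConv (C →ₗ[R] A)) :
    toConv (φ ∘ₗ (twist w F).ofConv) = twist w (toConv (φ ∘ₗ F.ofConv)) := by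
  rw [twist, comp_mul_convScalarHom, comp_convScalarHom_mul, twist]

lemma convPrecomp_twist (γ : C' →ₗc[R] C) (w : (WithConv (C →ₗ[R] R))ˣ)
    (F : WithConv (C →ₗ[R] A)) :
    convPrecomp γ (twist w F) =
      twist (convPrecompUnits γ w) (convPrecomp γ F) := by
  simp only [twist, map_mul, convPrecomp_convScalarHom]
  rfl

lemma map_convScalarHom_one (f : WithConv (C →ₗ[R] R)) :
    toConv (map (convScalarHom (A := A) f).ofConv (1 : WithConv (D →ₗ[R] B)).ofConv) =
      convScalarHom (convPrecomp (TensorProduct.fstCoalgHom R C D) f) := by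
  ext c d
  simp [Algebra.algebraMap_eq_smul_one, Algebra.TensorProduct.one_def, smul_tmul', smul_smul]

lemma map_one_convScalarHom (f : WithConv (D →ₗ[R] R)) :
    toConv (map (1 : WithConv (C →ₗ[R] A)).ofConv (convScalarHom (A := B) f).ofConv) =
      convScalarHom (convPrecomp (TensorProduct.sndCoalgHom R C D) f) := by
  ext c d
  simp [Algebra.algebraMap_eq_smul_one, Algebra.TensorProduct.one_def, smul_tmul', smul_smul,
    mul_comm]

lemma map_twist_left (w : (WithConv (C →ₗ[R] R))ˣ) (F : WithConv (C →ₗ[R] A))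
    (G : D →ₗ[R] B) :
    toConv (map (twist w F).ofConv G) =
      twist (convPrecompUnits (TensorProduct.fstCoalgHom R C D) w)
        (toConv (map F.ofConv G)) := by
  calc toConv (map (twist w F).ofConv G)
      = toConv (map (twist w F).ofConv (1 * toConv G * 1).ofConv) := by simp
    _ = _ := by
      rw [twist, ← map_convMul_map, ← map_convMul_map, map_convScalarHom_one,
        map_convScalarHom_one, twist]
      rfl

lemma map_twist_right (w : (WithConv (D →ₗ[R] R))ˣ) (F : WithConv (D →ₗ[R] B))
    (G : C →ₗ[R] A) :
    toConv (map G (twist w F).ofConv) =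
      twist (convPrecompUnits (TensorProduct.sndCoalgHom R C D) w)
        (toConv (map G F.ofConv)) := by
  calc toConv (map G (twist w F).ofConv)
      = toConv (map (1 * toConv G * 1).ofConv (twist w F).ofConv) := by simp
    _ = _ := by
      rw [twist, ← map_convMul_map, ← map_convMul_map, map_one_convScalarHom,
        map_one_convScalarHom, twist]
      rfl

lemma includeLeft_mul_includeRight (F : C →ₗ[R] A) (G : C →ₗ[R] B) :
    toConv (Algebra.TensorProduct.includeLeft.toLinearMap ∘ₗ F) *
        toConv (Algebra.TensorProduct.includeRight.toLinearMap ∘ₗ G) =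
      toConv (map F G ∘ₗ comul) := by
  have h : mul' R (A ⊗[R] B) ∘ₗ map (Algebra.TensorProduct.includeLeft.toLinearMap ∘ₗ F)
      (Algebra.TensorProduct.includeRight.toLinearMap ∘ₗ G) = map F G := by
    ext; simp
  ext c
  exact DFunLike.congr_fun h (comul c)

end LinearMap

namespace Bialgebra

variable {R A C : Type*} [CommSemiring R] [Semiring A] [Bialgebra R A]
  [AddCommMonoid C] [Module R C] [Coalgebra R C]

variable (R A C) in
def includeRightCoalgHom : C →ₗc[R] A ⊗[R] C where
  toLinearMap := TensorProduct.mk R A C 1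
  counit_comp := by ext; simp
  map_comp_comul := by
    ext c
    simp only [coe_comp, Function.comp_apply, mk_apply, comul_tmul, comul_one,
      Algebra.TensorProduct.one_def]
    hopf_tensor_induction comul (R := R) c with c₁ c₂
    simp

variable (R A C) in
def includeLeftCoalgHom : C →ₗc[R] C ⊗[R] A where
  toLinearMap := (TensorProduct.mk R C A).flip 1
  counit_comp := by ext; simp
  map_comp_comul := by
    ext c
    simp only [coe_comp, Function.comp_apply, flip_apply, mk_apply, comul_tmul, comul_one,
      Algebra.TensorProduct.one_def]
    hopf_tensor_induction comul (R := R) c with c₁ c₂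
    simp

@[simp] lemma includeRightCoalgHom_apply (c : C) : includeRightCoalgHom R A C c = 1 ⊗ₜ c := rfl

@[simp] lemma includeLeftCoalgHom_apply (c : C) : includeLeftCoalgHom R A C c = c ⊗ₜ 1 := rfl

end Bialgebra

open Bialgebra

section TwistedMul

variable {R A : Type*} [CommSemiring R] [Semiring A] [Bialgebra R A]

def twistedMul (u : (WithConv (A ⊗[R] A →ₗ[R] R))ˣ) : WithConv (A ⊗[R] A →ₗ[R] A) :=
  twist u (toConv (mul' R A))

variable (u : (WithConv (A ⊗[R] A →ₗ[R] R))ˣ)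

lemma counit_comp_twistedMul : counit ∘ₗ (twistedMul u).ofConv = counit := by
  have h := comp_twist (counit (R := R) (A := A)) u (toConv (mul' R A))
  rw [show counit ∘ₗ mul' R A = counit from (mulCoalgHom R A).counit_comp, toConv_counit,
    twist_one] at h
  exact congrArg ofConv h

lemma comul_comp_twistedMul :
    comul ∘ₗ (twistedMul u).ofConv =
      map (twistedMul u).ofConv (twistedMul u).ofConv ∘ₗ comul := by
  apply toConv_injective
  rw [← includeLeft_mul_includeRight, twistedMul, comp_twist, comp_twist, comp_twist,
    ← twist_mul, includeLeft_mul_includeRight]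
  exact congrArg (twist u ∘ toConv) (mulCoalgHom R A).map_comp_comul.symm

def twistedMulCoalgHom : A ⊗[R] A →ₗc[R] A where
  toLinearMap := (twistedMul u).ofConv
  counit_comp := counit_comp_twistedMul u
  map_comp_comul := (comul_comp_twistedMul u).symm

lemma twistedMul_one_tmul (hu : convPrecompUnits (includeRightCoalgHom R A A) u = 1) (x : A) :
    twistedMul u (1 ⊗ₜ x) = x := by
  have h := convPrecomp_twist (includeRightCoalgHom R A A) u (toConv (mul' R A))
  rw [hu, one_twist] at h
  simpa [twistedMul] using DFunLike.congr_fun (congrArg ofConv h) x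

lemma twistedMul_tmul_one (hu : convPrecompUnits (includeLeftCoalgHom R A A) u = 1) (x : A) :
    twistedMul u (x ⊗ₜ 1) = x := by
  have h := convPrecomp_twist (includeLeftCoalgHom R A A) u (toConv (mul' R A))
  rw [hu, one_twist] at h
  simpa [twistedMul] using DFunLike.congr_fun (congrArg ofConv h) x

local notation "π₁₂" => TensorProduct.fstCoalgHom R (A ⊗[R] A) A
local notation "π₂₃" => TensorProduct.sndCoalgHom R A (A ⊗[R] A)
local notation "μ₁₂" => Coalgebra.TensorProduct.map (mulCoalgHom R A) (CoalgHom.id R A)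
local notation "μ₂₃" => Coalgebra.TensorProduct.map (CoalgHom.id R A) (mulCoalgHom R A)

lemma comp_map_twistedMul_id {B : Type*} [Semiring B] [Algebra R B] (φ : A ⊗[R] A →ₗ[R] B) :
    toConv (φ ∘ₗ map (twistedMul u).ofConv LinearMap.id) =
      twist (convPrecompUnits π₁₂ u) (toConv (φ ∘ₗ map (mul' R A) LinearMap.id)) := by
  rw [← comp_twist, ← map_twist_left]
  rfl

lemma comp_map_id_twistedMul {B : Type*} [Semiring B] [Algebra R B] (φ : A ⊗[R] A →ₗ[R] B) :
    toConv (φ ∘ₗ map LinearMap.id (twistedMul u).ofConv) =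
      twist (convPrecompUnits π₂₃ u) (toConv (φ ∘ₗ map LinearMap.id (mul' R A))) := by
  rw [← comp_twist, ← map_twist_right]
  rfl

lemma twistedMul_comp_map_twistedMul_id :
    toConv ((twistedMul u).ofConv ∘ₗ map (twistedMul u).ofConv LinearMap.id) =
      twist (convPrecompUnits π₁₂ u * convPrecompUnits μ₁₂ u)
        (toConv (mul' R A ∘ₗ map (mul' R A) LinearMap.id)) := by
  set γ := Coalgebra.TensorProduct.map (twistedMulCoalgHom u) (CoalgHom.id R A)
  have hγ : convPrecompUnits γ u =
      convPrecompUnits π₁₂ u * convPrecompUnits μ₁₂ u *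
        (convPrecompUnits π₁₂ u)⁻¹ :=
    Units.ext <| (comp_map_twistedMul_id u (u : WithConv (A ⊗[R] A →ₗ[R] R)).ofConv).trans
      (twist_eq_conj _ _)
  calc toConv ((twistedMul u).ofConv ∘ₗ map (twistedMul u).ofConv LinearMap.id)
      = convPrecomp γ (twistedMul u) := rfl
    _ = twist (convPrecompUnits γ u) (twist (convPrecompUnits π₁₂ u)
          (toConv (mul' R A ∘ₗ map (mul' R A) LinearMap.id))) := by
      rw [twistedMul, convPrecomp_twist, ← comp_map_twistedMul_id]
      rfl
    _ = _ := by rw [twist_twist, hγ, inv_mul_cancel_right]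

lemma twistedMul_comp_map_id_twistedMul :
    toConv ((twistedMul u).ofConv ∘ₗ map LinearMap.id (twistedMul u).ofConv) =
      twist (convPrecompUnits π₂₃ u * convPrecompUnits μ₂₃ u)
        (toConv (mul' R A ∘ₗ map LinearMap.id (mul' R A))) := by
  set γ := Coalgebra.TensorProduct.map (CoalgHom.id R A) (twistedMulCoalgHom u)
  have hγ : convPrecompUnits γ u =
      convPrecompUnits π₂₃ u * convPrecompUnits μ₂₃ u *
        (convPrecompUnits π₂₃ u)⁻¹ :=
    Units.ext <| (comp_map_id_twistedMul u (u : WithConv (A ⊗[R] A →ₗ[R] R)).ofConv).trans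
      (twist_eq_conj _ _)
  calc toConv ((twistedMul u).ofConv ∘ₗ map LinearMap.id (twistedMul u).ofConv)
      = convPrecomp γ (twistedMul u) := rfl
    _ = twist (convPrecompUnits γ u) (twist (convPrecompUnits π₂₃ u)
          (toConv (mul' R A ∘ₗ map LinearMap.id (mul' R A)))) := by
      rw [twistedMul, convPrecomp_twist, ← comp_map_id_twistedMul]
      rfl
    _ = _ := by rw [twist_twist, hγ, inv_mul_cancel_right]

/-- In Sweedler notation: `u(x₁, y₁) u(x₂y₂, z) = u(y₁, z₁) u(x, y₂z₂)`. -/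
def IsConvCocycle : Prop :=
  convPrecompUnits π₁₂ u * convPrecompUnits μ₁₂ u =
    convPrecompUnits (Coalgebra.TensorProduct.assoc R R A A A).toCoalgHom
      (convPrecompUnits π₂₃ u * convPrecompUnits μ₂₃ u)

lemma twistedMul_assoc (hu : IsConvCocycle u) :
    (twistedMul u).ofConv ∘ₗ map (twistedMul u).ofConv LinearMap.id =
      (twistedMul u).ofConv ∘ₗ map LinearMap.id (twistedMul u).ofConv ∘ₗ
        (TensorProduct.assoc R A A A).toLinearMap := by
  set α := (Coalgebra.TensorProduct.assoc R R A A A).toCoalgHom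
  have hmul : toConv (mul' R A ∘ₗ map (mul' R A) LinearMap.id) =
      convPrecomp α (toConv (mul' R A ∘ₗ map LinearMap.id (mul' R A))) := by
    ext; simp [α, mul_assoc]
  apply toConv_injective
  rw [twistedMul_comp_map_twistedMul_id, hu, hmul, ← convPrecomp_twist,
    ← twistedMul_comp_map_id_twistedMul]
  rfl

end TwistedMul

variable {k H}

lemma epsilon2_eq_counit : epsilon2 k H = counit := by
  ext x y
  simp [epsilon2, mul_comm]

def cocycleUnit (σ σ' : H ⊗[k] H →ₗ[k] k) (hinv₁ : conv2 k H σ σ' = epsilon2 k H)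
    (hinv₂ : conv2 k H σ' σ = epsilon2 k H) : (WithConv (H ⊗[k] H →ₗ[k] k))ˣ where
  val := toConv σ
  inv := toConv σ'
  val_inv := (congrArg toConv (hinv₁.trans epsilon2_eq_counit)).trans toConv_counit
  inv_val := (congrArg toConv (hinv₂.trans epsilon2_eq_counit)).trans toConv_counit

lemma twmul_eq (σ σ' : H ⊗[k] H →ₗ[k] k) (hinv₁ : conv2 k H σ σ' = epsilon2 k H)
    (hinv₂ : conv2 k H σ' σ = epsilon2 k H) :
    twmul k H σ σ' = (twistedMul (cocycleUnit σ σ' hinv₁ hinv₂)).ofConv := by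
  ext x y
  simp only [twmul, comul2, twistedMul, twist, cocycleUnit, AlgebraTensorModule.curry_apply,
    restrictScalars_self, curry_apply, coe_comp, LinearEquiv.coe_coe, Function.comp_apply,
    map_tmul, convMul_apply, comul_tmul]
  hopf_tensor_induction comul (R := k) x with x₁ x₂
  hopf_tensor_induction comul (R := k) y with y₁ y₂
  simp only [tensorTensorTensorComm_tmul, AlgebraTensorModule.tensorTensorTensorComm_tmul, map_tmul,
    coe_comp, LinearEquiv.coe_coe, Function.comp_apply, id_coe, id_eq, rid_tmul, convMul_apply,
    comul_tmul, convScalarHom_apply, mul'_apply]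
  rw [Algebra.smul_def, Algebra.commutes]
  congr 1
  hopf_tensor_induction comul (R := k) x₁ with x₁₁ x₁₂
  hopf_tensor_induction comul (R := k) y₁ with y₁₁ y₁₂
  simp [Algebra.smul_def]

lemma IsNormalized.convPrecompUnits_includeRight {σ σ' : H ⊗[k] H →ₗ[k] k}
    (hσ : IsNormalized k H σ) (hinv₁ : conv2 k H σ σ' = epsilon2 k H)
    (hinv₂ : conv2 k H σ' σ = epsilon2 k H) :
    convPrecompUnits (includeRightCoalgHom k H H) (cocycleUnit σ σ' hinv₁ hinv₂) = 1 := by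
  ext x
  simp [cocycleUnit, convPrecompUnits, (hσ x).1]

lemma IsNormalized.convPrecompUnits_includeLeft {σ σ' : H ⊗[k] H →ₗ[k] k}
    (hσ : IsNormalized k H σ) (hinv₁ : conv2 k H σ σ' = epsilon2 k H)
    (hinv₂ : conv2 k H σ' σ = epsilon2 k H) :
    convPrecompUnits (includeLeftCoalgHom k H H) (cocycleUnit σ σ' hinv₁ hinv₂) = 1 := by
  ext x
  simp [cocycleUnit, convPrecompUnits, (hσ x).2]

lemma toConv_cocLHS (σ : H ⊗[k] H →ₗ[k] k) :
    toConv (cocLHS k H σ) =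
      convPrecomp (TensorProduct.sndCoalgHom k H (H ⊗[k] H)) (toConv σ) *
        convPrecomp (Coalgebra.TensorProduct.map (CoalgHom.id k H) (mulCoalgHom k H))
          (toConv σ) := by
  ext x y z
  have hx : TensorProduct.lift (.lsmul k H ∘ₗ counit) (comul x) = x :=
    DFunLike.congr_fun lift_lsmul_comp_counit_comp_comul x
  simp only [cocLHS, comul2]
  -- only the right side splits `x`; rewriting `x = ε(x₁) x₂` on the left matches the two
  nth_rw 1 [← hx]
  simp only [AlgebraTensorModule.curry_apply, restrictScalars_self, curry_apply, coe_comp,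
    LinearEquiv.coe_coe, Function.comp_apply, map_tmul, id_coe, id_eq, convMul_apply, comul_tmul]
  hopf_tensor_induction comul (R := k) y with y₁ y₂
  hopf_tensor_induction comul (R := k) z with z₁ z₂
  hopf_tensor_induction comul (R := k) x with x₁ x₂
  simp [← TensorProduct.smul_tmul']
  ring

lemma toConv_cocRHS_comp_assoc (σ : H ⊗[k] H →ₗ[k] k) :
    toConv (cocRHS k H σ ∘ₗ (TensorProduct.assoc k H H H).toLinearMap) =
      convPrecomp (TensorProduct.fstCoalgHom k (H ⊗[k] H) H) (toConv σ) *
        convPrecomp (Coalgebra.TensorProduct.map (mulCoalgHom k H) (CoalgHom.id k H))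
          (toConv σ) := by
  ext x y z
  have hz : TensorProduct.lift (.lsmul k H ∘ₗ counit) (comul z) = z :=
    DFunLike.congr_fun lift_lsmul_comp_counit_comp_comul z
  simp only [cocRHS, comul2, AlgebraTensorModule.curry_apply, restrictScalars_self, curry_apply,
    coe_comp, LinearEquiv.coe_coe, Function.comp_apply, assoc_tmul, assoc_symm_tmul, map_tmul,
    id_coe, id_eq, convMul_apply, comul_tmul]
  nth_rw 1 [← hz]
  hopf_tensor_induction comul (R := k) x with x₁ x₂
  hopf_tensor_induction comul (R := k) y with y₁ y₂
  hopf_tensor_induction comul (R := k) z with z₁ z₂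
  simp [mul_assoc]

lemma IsCocycle.isConvCocycle {σ σ' : H ⊗[k] H →ₗ[k] k} (hσ : IsCocycle k H σ)
    (hinv₁ : conv2 k H σ σ' = epsilon2 k H) (hinv₂ : conv2 k H σ' σ = epsilon2 k H) :
    IsConvCocycle (cocycleUnit σ σ' hinv₁ hinv₂) := by
  refine Units.ext ((toConv_cocRHS_comp_assoc σ).symm.trans ?_)
  rw [← hσ.2]
  exact congrArg (convPrecomp (Coalgebra.TensorProduct.assoc k k H H H).toCoalgHom)
    (toConv_cocLHS σ)

/-- The cocycle twist `H^σ` of a bialgebra is again a bialgebra: the twisted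
product is associative with unit `1`, and the original comultiplication and counit are
algebra maps for it. -/
theorem stmt7 (k : Type*) [Field k] (H : Type*) [Ring H] [Bialgebra k H]
    (σ σ' : H ⊗[k] H →ₗ[k] k)
    (hcoc : IsCocycle k H σ)
    (hinv₁ : conv2 k H σ σ' = epsilon2 k H)
    (hinv₂ : conv2 k H σ' σ = epsilon2 k H) :
    -- associativity of `·_σ`
    twmul k H σ σ' ∘ₗ TensorProduct.map (twmul k H σ σ') LinearMap.id
      = twmul k H σ σ' ∘ₗ TensorProduct.map LinearMap.id (twmul k H σ σ')
          ∘ₗ (TensorProduct.assoc k H H H).toLinearMap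
    -- unitality of `·_σ`
    ∧ (∀ x : H, twmul k H σ σ' ((1 : H) ⊗ₜ[k] x) = x)
    ∧ (∀ x : H, twmul k H σ σ' (x ⊗ₜ[k] (1 : H)) = x)
    -- the comultiplication is an algebra map for `·_σ`
    ∧ (Coalgebra.comul (R := k) (A := H)) ∘ₗ twmul k H σ σ'
        = TensorProduct.map (twmul k H σ σ') (twmul k H σ σ') ∘ₗ comul2 k H
    -- the counit is an algebra map for `·_σ`
    ∧ (Coalgebra.counit (R := k) (A := H)) ∘ₗ twmul k H σ σ' = epsilon2 k H := by
  set u := cocycleUnit σ σ' hinv₁ hinv₂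
  rw [twmul_eq σ σ' hinv₁ hinv₂, epsilon2_eq_counit]
  exact ⟨twistedMul_assoc u (hcoc.isConvCocycle hinv₁ hinv₂),
    twistedMul_one_tmul u (hcoc.1.convPrecompUnits_includeRight hinv₁ hinv₂),
    twistedMul_tmul_one u (hcoc.1.convPrecompUnits_includeLeft hinv₁ hinv₂),
    comul_comp_twistedMul u, counit_comp_twistedMul u⟩
end
end

section
/- Let H be a bialgebra over a field k, σ : H ⊗ H → k a normalized convolution-invertible 2-cocycle, and P a left H-comodule algebra. Then the left-twisted product p ·_σ q := σ(p₍₋₁₎, q₍₋₁₎) p₍₀₎ q₍₀₎ is associative with unit 1_P, and the original coaction δ : P → H ⊗ P is an algebra map from (P, ·_σ) to H^σ ⊗ (P, ·_σ); hence _σP := (P, ·_σ) is a left H^σ-comodule algebra. -/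
set_option synthInstance.maxHeartbeats 1000000
set_option maxHeartbeats 1000000


open TensorProduct

noncomputable section

variable (k : Type*) [Field k] (H : Type*) [Ring H] [Bialgebra k H]

variable (P : Type*) [Ring P] [Algebra k P]

/-- The left-twisted product on a comodule algebra:
`p ·_σ q = σ(p₍₋₁₎, q₍₋₁₎) p₍₀₎ q₍₀₎`. -/
def twmulP (σ : H ⊗[k] H →ₗ[k] k) (δ : P →ₗ[k] H ⊗[k] P) : P ⊗[k] P →ₗ[k] P :=
  (TensorProduct.lid k P).toLinearMap
    ∘ₗ TensorProduct.map σ (LinearMap.mul' k P)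
    ∘ₗ (TensorProduct.tensorTensorTensorComm k H P H P).toLinearMap
    ∘ₗ TensorProduct.map δ δ


namespace Stmt8Aux
variable {k : Type*} [Field k] {H : Type*} [Ring H] [Bialgebra k H]
  {P : Type*} [Ring P] [Algebra k P]
variable (σ σ' : H ⊗[k] H →ₗ[k] k) (δ : P →ₗ[k] H ⊗[k] P)

def auxL : ((H ⊗[k] P) ⊗[k] (H ⊗[k] P)) →ₗ[k] P :=
  (TensorProduct.lid k P).toLinearMap ∘ₗ TensorProduct.map σ (LinearMap.mul' k P)
    ∘ₗ (TensorProduct.tensorTensorTensorComm k H P H P).toLinearMap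

def auxT : H ⊗[k] H →ₗ[k] H :=
  (TensorProduct.lid k H).toLinearMap ∘ₗ TensorProduct.map σ (LinearMap.mul' k H)
    ∘ₗ comul2 k H

@[simp] lemma auxL_tmul (x y : H) (a b : P) :
    auxL σ ((x ⊗ₜ a) ⊗ₜ (y ⊗ₜ b)) = σ (x ⊗ₜ y) • (a * b) := by
  simp [auxL]

lemma twmulP_eq : twmulP k H P σ δ = auxL σ ∘ₗ TensorProduct.map δ δ := rfl

lemma twmulP_apply (p q : P) : twmulP k H P σ δ (p ⊗ₜ q) = auxL σ (δ p ⊗ₜ δ q) := by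
  rw [twmulP_eq]; simp

lemma comul2_tmul (x y : H) :
    comul2 k H (x ⊗ₜ y) = TensorProduct.tensorTensorTensorComm k H H H H
      (Coalgebra.comul x ⊗ₜ Coalgebra.comul y) := by
  simp [comul2]

lemma auxT_tmul (x y : H) :
    auxT σ (x ⊗ₜ y) = (TensorProduct.lid k H) ((TensorProduct.map σ (LinearMap.mul' k H))
      ((TensorProduct.tensorTensorTensorComm k H H H H)
        (Coalgebra.comul x ⊗ₜ Coalgebra.comul y))) := by
  simp [auxT, comul2_tmul]

lemma mul_eq_aux (u v : H ⊗[k] P) :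
    u * v = TensorProduct.map (LinearMap.mul' k H) (LinearMap.mul' k P)
      ((TensorProduct.tensorTensorTensorComm k H P H P) (u ⊗ₜ v)) := by
  induction u using TensorProduct.induction_on with
  | zero => simp
  | tmul x a =>
    induction v using TensorProduct.induction_on with
    | zero => simp
    | tmul y b => simp [Algebra.TensorProduct.tmul_mul_tmul]
    | add v1 v2 h1 h2 => simp only [mul_add, tmul_add, map_add, h1, h2]
  | add u1 u2 h1 h2 => simp only [add_mul, add_tmul, map_add, h1, h2]

def auxN : ((H ⊗[k] (H ⊗[k] P)) ⊗[k] (H ⊗[k] (H ⊗[k] P))) →ₗ[k] H ⊗[k] P :=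
  (TensorProduct.lid k (H ⊗[k] P)).toLinearMap
    ∘ₗ TensorProduct.map σ
        (TensorProduct.map (LinearMap.mul' k H) (LinearMap.mul' k P)
          ∘ₗ (TensorProduct.tensorTensorTensorComm k H P H P).toLinearMap)
    ∘ₗ (TensorProduct.tensorTensorTensorComm k H (H ⊗[k] P) H (H ⊗[k] P)).toLinearMap

@[simp] lemma auxN_tmul (x y : H) (w w' : H ⊗[k] P) :
    auxN σ ((x ⊗ₜ w) ⊗ₜ (y ⊗ₜ w')) = σ (x ⊗ₜ y) •
      TensorProduct.map (LinearMap.mul' k H) (LinearMap.mul' k P)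
        ((TensorProduct.tensorTensorTensorComm k H P H P) (w ⊗ₜ w')) := by
  simp [auxN]

lemma claim1 (hmulc : ∀ p q : P, δ (p * q) = δ p * δ q) (u v : (H ⊗[k] P)) :
    δ (auxL σ (u ⊗ₜ v))
      = auxN σ ((TensorProduct.map LinearMap.id δ u) ⊗ₜ (TensorProduct.map LinearMap.id δ v)) := by
  induction u using TensorProduct.induction_on with
  | zero => simp
  | tmul x a =>
    induction v using TensorProduct.induction_on with
    | zero => simp
    | tmul y b => simp [hmulc a b, mul_eq_aux (δ a) (δ b)]
    | add v1 v2 h1 h2 => simp only [tmul_add, map_add, h1, h2]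
  | add u1 u2 h1 h2 => simp only [add_tmul, map_add, h1, h2]

lemma claim2a (s t : H ⊗[k] H) (a b : P) :
    auxN σ ((TensorProduct.assoc k H H P (s ⊗ₜ a)) ⊗ₜ (TensorProduct.assoc k H H P (t ⊗ₜ b)))
      = ((TensorProduct.lid k H) ((TensorProduct.map σ (LinearMap.mul' k H))
          ((TensorProduct.tensorTensorTensorComm k H H H H) (s ⊗ₜ t)))) ⊗ₜ (a * b) := by
  induction s using TensorProduct.induction_on with
  | zero => simp
  | tmul x1 x2 =>
    induction t using TensorProduct.induction_on with
    | zero => simp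
    | tmul y1 y2 => simp [smul_tmul', Algebra.TensorProduct.tmul_mul_tmul]
    | add t1 t2 h1 h2 => simp only [add_tmul, tmul_add, map_add, h1, h2]
  | add s1 s2 h1 h2 => simp only [add_tmul, tmul_add, map_add, h1, h2]

lemma claim2 (u v : H ⊗[k] P) :
    auxN σ ((TensorProduct.assoc k H H P
        (TensorProduct.map (Coalgebra.comul (R := k) (A := H)) LinearMap.id u)) ⊗ₜ
      (TensorProduct.assoc k H H P
        (TensorProduct.map (Coalgebra.comul (R := k) (A := H)) LinearMap.id v)))
      = TensorProduct.map (auxT σ) (LinearMap.mul' k P)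
          ((TensorProduct.tensorTensorTensorComm k H P H P) (u ⊗ₜ v)) := by
  induction u using TensorProduct.induction_on with
  | zero => simp
  | tmul x a =>
    induction v using TensorProduct.induction_on with
    | zero => simp
    | tmul y b => simp [claim2a, auxT_tmul]
    | add v1 v2 h1 h2 => simp only [tmul_add, map_add, h1, h2]
  | add u1 u2 h1 h2 => simp only [add_tmul, map_add, h1, h2]

lemma hcoassoc' (hcoassoc : (TensorProduct.map (Coalgebra.comul (R := k) (A := H)) LinearMap.id) ∘ₗ δ
      = (TensorProduct.assoc k H H P).symm.toLinearMap
          ∘ₗ (TensorProduct.map LinearMap.id δ) ∘ₗ δ) (p : P) :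
    TensorProduct.map LinearMap.id δ (δ p)
      = TensorProduct.assoc k H H P
          (TensorProduct.map (Coalgebra.comul (R := k) (A := H)) LinearMap.id (δ p)) := by
  have := LinearMap.congr_fun hcoassoc p
  simp only [LinearMap.comp_apply, LinearEquiv.coe_coe] at this
  rw [this]
  simp

lemma lemC (hmulc : ∀ p q : P, δ (p * q) = δ p * δ q)
    (hcoassoc : (TensorProduct.map (Coalgebra.comul (R := k) (A := H)) LinearMap.id) ∘ₗ δ
      = (TensorProduct.assoc k H H P).symm.toLinearMap
          ∘ₗ (TensorProduct.map LinearMap.id δ) ∘ₗ δ) (p q : P) :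
    δ (twmulP k H P σ δ (p ⊗ₜ q))
      = TensorProduct.map (auxT σ) (LinearMap.mul' k P)
          ((TensorProduct.tensorTensorTensorComm k H P H P) (δ p ⊗ₜ δ q)) := by
  rw [twmulP_apply, claim1 σ δ hmulc, hcoassoc' δ hcoassoc p, hcoassoc' δ hcoassoc q, claim2]

lemma cocR_eval (x y z : H) :
    cocRHS k H σ (x ⊗ₜ (y ⊗ₜ z)) = σ (auxT σ (x ⊗ₜ y) ⊗ₜ z) := by
  have h : ∀ c : (H ⊗[k] H) ⊗[k] (H ⊗[k] H),
      (LinearMap.mul' k k) ((TensorProduct.map σ (σ ∘ₗ TensorProduct.map (LinearMap.mul' k H) LinearMap.id))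
        ((TensorProduct.assoc k (H ⊗[k] H) (H ⊗[k] H) H) (c ⊗ₜ z)))
      = σ (((TensorProduct.lid k H) ((TensorProduct.map σ (LinearMap.mul' k H)) c)) ⊗ₜ z) := by
    intro c
    induction c using TensorProduct.induction_on with
    | zero => simp
    | tmul s t =>
      simp only [TensorProduct.assoc_tmul, TensorProduct.map_tmul, LinearMap.coe_comp,
        Function.comp_apply, LinearMap.mul'_apply, TensorProduct.lid_tmul, LinearMap.id_coe, id_eq]
      rw [← smul_tmul', map_smul, smul_eq_mul]
    | add c1 c2 h1 h2 => simp only [add_tmul, map_add, h1, h2, tmul_add]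
  simp only [cocRHS, LinearMap.comp_apply, LinearEquiv.coe_coe,
    TensorProduct.assoc_symm_tmul, TensorProduct.map_tmul, LinearMap.id_coe, id_eq]
  rw [h (comul2 k H (x ⊗ₜ y))]
  simp [auxT]

lemma cocL_eval (x y z : H) :
    cocLHS k H σ (x ⊗ₜ (y ⊗ₜ z)) = σ (x ⊗ₜ auxT σ (y ⊗ₜ z)) := by
  have h : ∀ c : (H ⊗[k] H) ⊗[k] (H ⊗[k] H),
      (LinearMap.mul' k k) ((TensorProduct.map σ (σ ∘ₗ TensorProduct.map LinearMap.id (LinearMap.mul' k H)))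
        ((TensorProduct.leftComm k H (H ⊗[k] H) (H ⊗[k] H)) (x ⊗ₜ c)))
      = σ (x ⊗ₜ ((TensorProduct.lid k H) ((TensorProduct.map σ (LinearMap.mul' k H)) c))) := by
    intro c
    induction c using TensorProduct.induction_on with
    | zero => simp
    | tmul s t =>
      simp only [TensorProduct.leftComm_tmul, TensorProduct.map_tmul, LinearMap.coe_comp,
        Function.comp_apply, LinearMap.mul'_apply, TensorProduct.lid_tmul, LinearMap.id_coe, id_eq]
      rw [tmul_smul, map_smul, smul_eq_mul]
    | add c1 c2 h1 h2 => simp only [add_tmul, map_add, h1, h2, tmul_add]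
  simp only [cocLHS, LinearMap.comp_apply, LinearEquiv.coe_coe,
    TensorProduct.map_tmul, LinearMap.id_coe, id_eq]
  rw [h (comul2 k H (y ⊗ₜ z))]
  simp [auxT]

lemma assoc5 (hcoc2 : cocLHS k H σ = cocRHS k H σ) (u v w : H ⊗[k] P) :
    auxL σ ((TensorProduct.map (auxT σ) (LinearMap.mul' k P)
        ((TensorProduct.tensorTensorTensorComm k H P H P) (u ⊗ₜ v))) ⊗ₜ w)
      = auxL σ (u ⊗ₜ (TensorProduct.map (auxT σ) (LinearMap.mul' k P)
        ((TensorProduct.tensorTensorTensorComm k H P H P) (v ⊗ₜ w)))) := by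
  induction u using TensorProduct.induction_on with
  | zero => simp
  | tmul x a =>
    induction v using TensorProduct.induction_on with
    | zero => simp
    | tmul y b =>
      induction w using TensorProduct.induction_on with
      | zero => simp
      | tmul z c =>
        simp only [TensorProduct.tensorTensorTensorComm_tmul, TensorProduct.map_tmul,
          LinearMap.mul'_apply, auxL_tmul]
        rw [← cocR_eval, ← hcoc2, cocL_eval, mul_assoc]
      | add w1 w2 h1 h2 => simp only [tmul_add, map_add, h1, h2]
    | add v1 v2 h1 h2 => simp only [tmul_add, add_tmul, map_add, h1, h2]
  | add u1 u2 h1 h2 => simp only [tmul_add, add_tmul, map_add, h1, h2]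

lemma unit_claim_left (hnorm : IsNormalized k H σ) (w : H ⊗[k] P) :
    auxL σ (((1 : H) ⊗ₜ (1 : P)) ⊗ₜ w)
      = (TensorProduct.lid k P)
          ((TensorProduct.map (Coalgebra.counit (R := k) (A := H)) LinearMap.id) w) := by
  induction w using TensorProduct.induction_on with
  | zero => simp
  | tmul x u => simp [(hnorm x).1]
  | add w1 w2 h1 h2 => simp only [tmul_add, map_add, h1, h2]

lemma unit_claim_right (hnorm : IsNormalized k H σ) (w : H ⊗[k] P) :
    auxL σ (w ⊗ₜ ((1 : H) ⊗ₜ (1 : P)))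
      = (TensorProduct.lid k P)
          ((TensorProduct.map (Coalgebra.counit (R := k) (A := H)) LinearMap.id) w) := by
  induction w using TensorProduct.induction_on with
  | zero => simp
  | tmul x u => simp [(hnorm x).2]
  | add w1 w2 h1 h2 => simp only [tmul_add, add_tmul, map_add, h1, h2]

lemma counit2_sub (s t : H ⊗[k] H) :
    (TensorProduct.rid k (H ⊗[k] H))
        ((TensorProduct.map LinearMap.id (epsilon2 k H))
          ((TensorProduct.tensorTensorTensorComm k H H H H) (s ⊗ₜ t)))
      = ((TensorProduct.rid k H) ((TensorProduct.map LinearMap.id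
            (Coalgebra.counit (R := k) (A := H))) s)) ⊗ₜ
        ((TensorProduct.rid k H) ((TensorProduct.map LinearMap.id
            (Coalgebra.counit (R := k) (A := H))) t)) := by
  induction s using TensorProduct.induction_on with
  | zero => simp
  | tmul x1 x2 =>
    induction t using TensorProduct.induction_on with
    | zero => simp
    | tmul y1 y2 =>
      simp [epsilon2, smul_tmul', tmul_smul, smul_smul, mul_comm]
    | add t1 t2 h1 h2 => simp only [add_tmul, tmul_add, map_add, h1, h2]
  | add s1 s2 h1 h2 => simp only [add_tmul, tmul_add, map_add, h1, h2]

lemma counit2 (w : H ⊗[k] H) :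
    (TensorProduct.rid k (H ⊗[k] H))
        ((TensorProduct.map LinearMap.id (epsilon2 k H)) (comul2 k H w)) = w := by
  induction w using TensorProduct.induction_on with
  | zero => simp
  | tmul x y =>
    rw [comul2_tmul, counit2_sub]
    have hx : (TensorProduct.map (LinearMap.id) (Coalgebra.counit (R := k) (A := H)))
        (Coalgebra.comul x) = x ⊗ₜ (1 : k) := Coalgebra.lTensor_counit_comul x
    have hy : (TensorProduct.map (LinearMap.id) (Coalgebra.counit (R := k) (A := H)))
        (Coalgebra.comul y) = y ⊗ₜ (1 : k) := Coalgebra.lTensor_counit_comul y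
    rw [hx, hy]
    simp
  | add w1 w2 h1 h2 => simp only [map_add, h1, h2]

def auxG : (((H ⊗[k] H) ⊗[k] H) ⊗[k] ((H ⊗[k] H) ⊗[k] H)) →ₗ[k]
    (((H ⊗[k] H) ⊗[k] (H ⊗[k] H)) ⊗[k] (H ⊗[k] H)) :=
  (TensorProduct.map (TensorProduct.tensorTensorTensorComm k H H H H).toLinearMap LinearMap.id)
    ∘ₗ (TensorProduct.tensorTensorTensorComm k (H ⊗[k] H) H (H ⊗[k] H) H).toLinearMap

def auxG' : ((H ⊗[k] (H ⊗[k] H)) ⊗[k] (H ⊗[k] (H ⊗[k] H))) →ₗ[k]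
    (((H ⊗[k] H) ⊗[k] (H ⊗[k] H)) ⊗[k] (H ⊗[k] H)) :=
  (TensorProduct.assoc k (H ⊗[k] H) (H ⊗[k] H) (H ⊗[k] H)).symm.toLinearMap
    ∘ₗ (TensorProduct.map LinearMap.id (TensorProduct.tensorTensorTensorComm k H H H H).toLinearMap)
    ∘ₗ (TensorProduct.tensorTensorTensorComm k H (H ⊗[k] H) H (H ⊗[k] H)).toLinearMap

lemma subA (s t : H ⊗[k] H) :
    (TensorProduct.map (comul2 k H) LinearMap.id)
        ((TensorProduct.tensorTensorTensorComm k H H H H) (s ⊗ₜ t))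
      = auxG (((TensorProduct.map (Coalgebra.comul (R := k) (A := H)) LinearMap.id) s) ⊗ₜ
          ((TensorProduct.map (Coalgebra.comul (R := k) (A := H)) LinearMap.id) t)) := by
  induction s using TensorProduct.induction_on with
  | zero => simp
  | tmul x1 x2 =>
    induction t using TensorProduct.induction_on with
    | zero => simp
    | tmul y1 y2 => simp [auxG, comul2_tmul]
    | add t1 t2 h1 h2 => simp only [add_tmul, tmul_add, map_add, h1, h2]
  | add s1 s2 h1 h2 => simp only [add_tmul, tmul_add, map_add, h1, h2]

lemma subB (s t : H ⊗[k] H) :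
    (TensorProduct.assoc k (H ⊗[k] H) (H ⊗[k] H) (H ⊗[k] H)).symm
        ((TensorProduct.map LinearMap.id (comul2 k H))
          ((TensorProduct.tensorTensorTensorComm k H H H H) (s ⊗ₜ t)))
      = auxG' (((TensorProduct.map LinearMap.id (Coalgebra.comul (R := k) (A := H))) s) ⊗ₜ
          ((TensorProduct.map LinearMap.id (Coalgebra.comul (R := k) (A := H))) t)) := by
  induction s using TensorProduct.induction_on with
  | zero => simp
  | tmul x1 x2 =>
    induction t using TensorProduct.induction_on with
    | zero => simp
    | tmul y1 y2 => simp [auxG', comul2_tmul]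
    | add t1 t2 h1 h2 => simp only [add_tmul, tmul_add, map_add, h1, h2]
  | add s1 s2 h1 h2 => simp only [add_tmul, tmul_add, map_add, h1, h2]

lemma subC (u v : H ⊗[k] (H ⊗[k] H)) :
    auxG (((TensorProduct.assoc k H H H).symm u) ⊗ₜ ((TensorProduct.assoc k H H H).symm v))
      = auxG' (u ⊗ₜ v) := by
  induction u using TensorProduct.induction_on with
  | zero => simp
  | tmul x1 uw =>
    induction uw using TensorProduct.induction_on with
    | zero => simp
    | tmul x2 x3 =>
      induction v using TensorProduct.induction_on with
      | zero => simp
      | tmul y1 vw =>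
        induction vw using TensorProduct.induction_on with
        | zero => simp
        | tmul y2 y3 => simp [auxG, auxG']
        | add a b h1 h2 => simp only [tmul_add, add_tmul, map_add, h1, h2]
      | add a b h1 h2 => simp only [tmul_add, add_tmul, map_add, h1, h2]
    | add a b h1 h2 => simp only [tmul_add, add_tmul, map_add, h1, h2]
  | add a b h1 h2 => simp only [tmul_add, add_tmul, map_add, h1, h2]

lemma coassoc2 (w : H ⊗[k] H) :
    (TensorProduct.map (comul2 k H) LinearMap.id) (comul2 k H w)
      = (TensorProduct.assoc k (H ⊗[k] H) (H ⊗[k] H) (H ⊗[k] H)).symm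
          ((TensorProduct.map LinearMap.id (comul2 k H)) (comul2 k H w)) := by
  induction w using TensorProduct.induction_on with
  | zero => simp
  | tmul x y =>
    rw [comul2_tmul, subA, subB]
    have hx : (TensorProduct.map (Coalgebra.comul (R := k) (A := H)) LinearMap.id)
        (Coalgebra.comul x) = (TensorProduct.assoc k H H H).symm
          ((TensorProduct.map LinearMap.id (Coalgebra.comul (R := k) (A := H)))
            (Coalgebra.comul x)) :=
      (Coalgebra.coassoc_symm_apply x).symm
    have hy : (TensorProduct.map (Coalgebra.comul (R := k) (A := H)) LinearMap.id)
        (Coalgebra.comul y) = (TensorProduct.assoc k H H H).symm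
          ((TensorProduct.map LinearMap.id (Coalgebra.comul (R := k) (A := H)))
            (Coalgebra.comul y)) :=
      (Coalgebra.coassoc_symm_apply y).symm
    rw [hx, hy, subC]
  | add w1 w2 h1 h2 => simp only [map_add, h1, h2]

lemma twmul_apply (w : H ⊗[k] H) :
    twmul k H σ σ' w = (TensorProduct.rid k H)
      ((TensorProduct.map (auxT σ) σ') (comul2 k H w)) := by
  have h : ∀ c : (H ⊗[k] H) ⊗[k] (H ⊗[k] H),
      (TensorProduct.map ((TensorProduct.lid k H).toLinearMap
          ∘ₗ TensorProduct.map σ (LinearMap.mul' k H)) σ')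
        ((TensorProduct.map (comul2 k H) LinearMap.id) c)
      = (TensorProduct.map (auxT σ) σ') c := by
    intro c
    induction c using TensorProduct.induction_on with
    | zero => simp
    | tmul s t => simp [auxT]
    | add c1 c2 h1 h2 => simp only [map_add, h1, h2]
  simp only [twmul, LinearMap.comp_apply, LinearEquiv.coe_coe]
  rw [h]

lemma twmul_eq : twmul k H σ σ' = (TensorProduct.rid k H).toLinearMap
    ∘ₗ TensorProduct.map (auxT σ) σ' ∘ₗ comul2 k H :=
  LinearMap.ext (twmul_apply σ σ')

lemma hlemma (hinv₂ : conv2 k H σ' σ = epsilon2 k H) (w : H ⊗[k] H) :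
    (TensorProduct.rid k H) ((TensorProduct.map (twmul k H σ σ') σ) (comul2 k H w))
      = auxT σ w := by
  rw [twmul_eq]
  have subD : ∀ c : (H ⊗[k] H) ⊗[k] (H ⊗[k] H),
      (TensorProduct.rid k H) ((TensorProduct.map ((TensorProduct.rid k H).toLinearMap
          ∘ₗ TensorProduct.map (auxT σ) σ' ∘ₗ comul2 k H) σ) c)
      = (TensorProduct.rid k H) ((TensorProduct.map ((TensorProduct.rid k H).toLinearMap
          ∘ₗ TensorProduct.map (auxT σ) σ') σ)
            ((TensorProduct.map (comul2 k H) LinearMap.id) c)) := by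
    intro c
    induction c using TensorProduct.induction_on with
    | zero => simp
    | tmul s t => simp
    | add c1 c2 h1 h2 => simp only [map_add, h1, h2]
  rw [subD, coassoc2]
  have subE : ∀ u : (H ⊗[k] H) ⊗[k] ((H ⊗[k] H) ⊗[k] (H ⊗[k] H)),
      (TensorProduct.rid k H) ((TensorProduct.map ((TensorProduct.rid k H).toLinearMap
          ∘ₗ TensorProduct.map (auxT σ) σ') σ)
            ((TensorProduct.assoc k (H ⊗[k] H) (H ⊗[k] H) (H ⊗[k] H)).symm u))
      = (TensorProduct.rid k H) ((TensorProduct.map (auxT σ)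
          (LinearMap.mul' k k ∘ₗ TensorProduct.map σ' σ)) u) := by
    intro u
    induction u using TensorProduct.induction_on with
    | zero => simp
    | tmul c uw =>
      induction uw using TensorProduct.induction_on with
      | zero => simp
      | tmul d e =>
        simp only [TensorProduct.assoc_symm_tmul, TensorProduct.map_tmul, LinearMap.coe_comp,
          Function.comp_apply, LinearEquiv.coe_coe, TensorProduct.rid_tmul,
          LinearMap.mul'_apply]
        rw [smul_smul, mul_comm]
      | add a b h1 h2 => simp only [tmul_add, map_add, h1, h2]
    | add a b h1 h2 => simp only [add_tmul, map_add, h1, h2]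
  rw [subE]
  have subF : ∀ c : (H ⊗[k] H) ⊗[k] (H ⊗[k] H),
      (TensorProduct.rid k H) ((TensorProduct.map (auxT σ)
          (LinearMap.mul' k k ∘ₗ TensorProduct.map σ' σ))
            ((TensorProduct.map LinearMap.id (comul2 k H)) c))
      = (TensorProduct.rid k H) ((TensorProduct.map (auxT σ) (conv2 k H σ' σ)) c) := by
    intro c
    induction c using TensorProduct.induction_on with
    | zero => simp
    | tmul s t => simp [conv2]
    | add c1 c2 h1 h2 => simp only [map_add, h1, h2]
  rw [subF, hinv₂]
  have subG : ∀ c : (H ⊗[k] H) ⊗[k] (H ⊗[k] H),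
      (TensorProduct.rid k H) ((TensorProduct.map (auxT σ) (epsilon2 k H)) c)
      = auxT σ ((TensorProduct.rid k (H ⊗[k] H))
          ((TensorProduct.map LinearMap.id (epsilon2 k H)) c)) := by
    intro c
    induction c using TensorProduct.induction_on with
    | zero => simp
    | tmul s t => simp
    | add c1 c2 h1 h2 => simp only [map_add, h1, h2]
  rw [subG, counit2]


def auxQ : ((H ⊗[k] (H ⊗[k] P)) ⊗[k] (H ⊗[k] (H ⊗[k] P))) →ₗ[k] H ⊗[k] P :=
  (TensorProduct.map (twmul k H σ σ') (auxL σ))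
    ∘ₗ (TensorProduct.tensorTensorTensorComm k H (H ⊗[k] P) H (H ⊗[k] P)).toLinearMap

lemma claim3 (u v : H ⊗[k] P) :
    (TensorProduct.map (twmul k H σ σ') (twmulP k H P σ δ))
        ((TensorProduct.tensorTensorTensorComm k H P H P) (u ⊗ₜ v))
      = auxQ σ σ' ((TensorProduct.map LinearMap.id δ u) ⊗ₜ
          (TensorProduct.map LinearMap.id δ v)) := by
  induction u using TensorProduct.induction_on with
  | zero => simp
  | tmul x a =>
    induction v using TensorProduct.induction_on with
    | zero => simp
    | tmul y b => simp [auxQ, twmulP_apply]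
    | add v1 v2 h1 h2 => simp only [tmul_add, map_add, h1, h2]
  | add u1 u2 h1 h2 => simp only [add_tmul, map_add, h1, h2]

lemma claim4a (s t : H ⊗[k] H) (a b : P) :
    auxQ σ σ' ((TensorProduct.assoc k H H P (s ⊗ₜ a)) ⊗ₜ
        (TensorProduct.assoc k H H P (t ⊗ₜ b)))
      = ((TensorProduct.rid k H) ((TensorProduct.map (twmul k H σ σ') σ)
          ((TensorProduct.tensorTensorTensorComm k H H H H) (s ⊗ₜ t)))) ⊗ₜ (a * b) := by
  induction s using TensorProduct.induction_on with
  | zero => simp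
  | tmul x1 x2 =>
    induction t using TensorProduct.induction_on with
    | zero => simp
    | tmul y1 y2 => simp [auxQ, smul_tmul', tmul_smul]
    | add t1 t2 h1 h2 => simp only [add_tmul, tmul_add, map_add, h1, h2]
  | add s1 s2 h1 h2 => simp only [add_tmul, tmul_add, map_add, h1, h2]

lemma claim4 (u v : H ⊗[k] P) :
    auxQ σ σ' ((TensorProduct.assoc k H H P
        (TensorProduct.map (Coalgebra.comul (R := k) (A := H)) LinearMap.id u)) ⊗ₜ
      (TensorProduct.assoc k H H P
        (TensorProduct.map (Coalgebra.comul (R := k) (A := H)) LinearMap.id v)))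
      = TensorProduct.map ((TensorProduct.rid k H).toLinearMap
            ∘ₗ TensorProduct.map (twmul k H σ σ') σ ∘ₗ comul2 k H) (LinearMap.mul' k P)
          ((TensorProduct.tensorTensorTensorComm k H P H P) (u ⊗ₜ v)) := by
  induction u using TensorProduct.induction_on with
  | zero => simp
  | tmul x a =>
    induction v using TensorProduct.induction_on with
    | zero => simp
    | tmul y b => simp [claim4a, comul2_tmul]
    | add v1 v2 h1 h2 => simp only [tmul_add, map_add, h1, h2]
  | add u1 u2 h1 h2 => simp only [add_tmul, map_add, h1, h2]


end Stmt8Aux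

/-- For a 2-cocycle `σ` and a left `H`-comodule algebra `P`, the twisted
product `p ·_σ q = σ(p₍₋₁₎, q₍₋₁₎) p₍₀₎q₍₀₎` is associative and unital, and the coaction
is an algebra map to `H^σ ⊗ (P, ·_σ)`, so `_σP` is a left `H^σ`-comodule algebra. -/
theorem stmt8 (k : Type*) [Field k] (H : Type*) [Ring H] [Bialgebra k H]
    (P : Type*) [Ring P] [Algebra k P]
    (σ σ' : H ⊗[k] H →ₗ[k] k)
    (hcoc : IsCocycle k H σ)
    (hinv₁ : conv2 k H σ σ' = epsilon2 k H)
    (hinv₂ : conv2 k H σ' σ = epsilon2 k H)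
    (δ : P →ₗ[k] H ⊗[k] P)
    (hcoassoc : (TensorProduct.map (Coalgebra.comul (R := k) (A := H)) LinearMap.id) ∘ₗ δ
      = (TensorProduct.assoc k H H P).symm.toLinearMap
          ∘ₗ (TensorProduct.map LinearMap.id δ) ∘ₗ δ)
    (hcounit : ∀ p : P,
      (TensorProduct.lid k P)
        ((TensorProduct.map (Coalgebra.counit (R := k) (A := H)) LinearMap.id) (δ p)) = p)
    (hmulc : ∀ p q : P, δ (p * q) = δ p * δ q)
    (hone : δ 1 = 1) :
    -- associativity of `·_σ` on `P`
    twmulP k H P σ δ ∘ₗ TensorProduct.map (twmulP k H P σ δ) LinearMap.id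
      = twmulP k H P σ δ ∘ₗ TensorProduct.map LinearMap.id (twmulP k H P σ δ)
          ∘ₗ (TensorProduct.assoc k P P P).toLinearMap
    -- unitality of `·_σ`
    ∧ (∀ p : P, twmulP k H P σ δ ((1 : P) ⊗ₜ[k] p) = p)
    ∧ (∀ p : P, twmulP k H P σ δ (p ⊗ₜ[k] (1 : P)) = p)
    -- the coaction is an algebra map from `(P, ·_σ)` to `H^σ ⊗ (P, ·_σ)`
    ∧ δ ∘ₗ twmulP k H P σ δ
        = TensorProduct.map (twmul k H σ σ') (twmulP k H P σ δ)
            ∘ₗ (TensorProduct.tensorTensorTensorComm k H P H P).toLinearMap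
            ∘ₗ TensorProduct.map δ δ := by
  obtain ⟨hnorm, hcoc2⟩ := hcoc
  refine ⟨?_, ?_, ?_, ?_⟩
  · -- associativity
    apply TensorProduct.ext_threefold
    intro p q r
    simp only [LinearMap.comp_apply, TensorProduct.map_tmul, LinearMap.id_coe, id_eq,
      LinearEquiv.coe_coe, TensorProduct.assoc_tmul]
    rw [Stmt8Aux.twmulP_apply σ δ (twmulP k H P σ δ (p ⊗ₜ q)) r,
      Stmt8Aux.twmulP_apply σ δ p (twmulP k H P σ δ (q ⊗ₜ r)),
      Stmt8Aux.lemC σ δ hmulc hcoassoc p q, Stmt8Aux.lemC σ δ hmulc hcoassoc q r,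
      Stmt8Aux.assoc5 σ hcoc2 (δ p) (δ q) (δ r)]
  · -- left unit
    intro p
    rw [Stmt8Aux.twmulP_apply, hone, Algebra.TensorProduct.one_def,
      Stmt8Aux.unit_claim_left σ hnorm (δ p)]
    exact hcounit p
  · -- right unit
    intro p
    rw [Stmt8Aux.twmulP_apply, hone, Algebra.TensorProduct.one_def,
      Stmt8Aux.unit_claim_right σ hnorm (δ p)]
    exact hcounit p
  · -- the coaction is an algebra map
    apply TensorProduct.ext'
    intro p q
    simp only [LinearMap.comp_apply, TensorProduct.map_tmul, LinearEquiv.coe_coe]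
    rw [Stmt8Aux.lemC σ δ hmulc hcoassoc p q,
      Stmt8Aux.claim3 σ σ' δ (δ p) (δ q),
      Stmt8Aux.hcoassoc' δ hcoassoc p, Stmt8Aux.hcoassoc' δ hcoassoc q,
      Stmt8Aux.claim4 σ σ' (δ p) (δ q)]
    have hFT : ((TensorProduct.rid k H).toLinearMap
        ∘ₗ TensorProduct.map (twmul k H σ σ') σ ∘ₗ comul2 k H) = Stmt8Aux.auxT σ :=
      LinearMap.ext (Stmt8Aux.hlemma σ σ' hinv₂)
    rw [hFT]
end
end
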